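/- The polynomial P(z_1,z_2,z_3) = y^3 + x^2, where y = z_3 - (z_1+z_2)/2 and x = z_1 - z_2, is translation invariant, and its derived polynomial under fusing z_1 and z_2 is y^3 = (z_3 - z^{(2)})^3 (up to scalar); hence D_{2,1} = 3 while S_3 - S_2 = 2 - 0 = 2, so D_{2,1} > S_3 - S_2. -/

import Mathlib

open MvPolynomial

noncomputable section

/-- Variable type for the fusion of the first `a` variables: `Sum.inl i` are the
auxiliary variables `ξ i`, `Sum.inr none` is the fused variable (center of mass)
`z`, and `Sum.inr (some j)` are the untouched variables `z j` for `a ≤ j`. -/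
abbrev FVars (N : ℕ) := Fin N ⊕ Option (Fin N)

/-- The auxiliary variables `ξ i` for `i < a`, with the constraint `∑ ξ i = 0`
imposed by eliminating the last one. -/
def fuseXi (N a : ℕ) (i : Fin N) : MvPolynomial (FVars N) ℂ :=
  if i.val + 1 < a then X (Sum.inl i)
  else -(∑ j ∈ Finset.univ.filter (fun j : Fin N => j.val + 1 < a), X (Sum.inl j))

/-- Fusion substitution `z i = z + λ * ξ i` for `i < a`, where `λ` is the
polynomial variable and `z = X (Sum.inr none)`. -/
def fuse (N a : ℕ) : MvPolynomial (Fin N) ℂ →ₐ[ℂ] Polynomial (MvPolynomial (FVars N) ℂ) :=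
  MvPolynomial.aeval (fun i =>
    if i.val < a then Polynomial.C (X (Sum.inr none)) + Polynomial.X * Polynomial.C (fuseXi N a i)
    else Polynomial.C (X (Sum.inr (some i))))

/-- `Qcoeff N a P m` is the coefficient `Q^m` of `λ^m` in the fusion expansion of `P`. -/
def Qcoeff (N a : ℕ) (P : MvPolynomial (Fin N) ℂ) (m : ℕ) : MvPolynomial (FVars N) ℂ :=
  (fuse N a P).coeff m

/-- `minDeg N P a` is `S_a`: the minimal total degree of `P` in `z 1, ..., z a`. -/
def minDeg (N : ℕ) (P : MvPolynomial (Fin N) ℂ) (a : ℕ) : ℕ :=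
  sInf {d | ∃ mo ∈ P.support, d = ∑ i ∈ Finset.univ.filter (fun i : Fin N => i.val < a), mo i}

/-- Translation invariance of a multivariate polynomial. -/
def TransInv (N : ℕ) (P : MvPolynomial (Fin N) ℂ) : Prop :=
  ∀ c : ℂ, MvPolynomial.aeval (fun i : Fin N => X i + MvPolynomial.C c) P = P

/-- Symmetry of a multivariate polynomial. -/
def SymmPoly (N : ℕ) (P : MvPolynomial (Fin N) ℂ) : Prop :=
  ∀ σ : Equiv.Perm (Fin N), rename ⇑σ P = P

/-- The counterexample polynomial `P = y^3 + x^2` with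
`y = z_3 - (z_1+z_2)/2` and `x = z_1 - z_2`. -/
def Pnh : MvPolynomial (Fin 3) ℂ :=
  (X 2 - MvPolynomial.C (1/2 : ℂ) * (X 0 + X 1)) ^ 3 + (X 0 - X 1) ^ 2

/-!
Both `y = z_3 - (z_1 + z_2)/2` and `x = z_1 - z_2` are translation invariant, hence so is
`P = y^3 + x^2`. The `λ^0` term of the fusion substitution sends `z_1, z_2` to `z^{(2)}`, which
kills `x` and turns `y` into `z_3 - z^{(2)}`; a power of `z^{(2)} - z_3` (a nonzero nonunit of a
domain) vanishes to exactly its own order. Finally `P` is the sum of its homogeneous parts of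
degrees 3 and 2, so `S_3 = 2`, while the monomial `z_3^3` has degree 0 in `z_1, z_2`, so `S_2 = 0`.
-/

lemma TransInv.add {N : ℕ} {P Q : MvPolynomial (Fin N) ℂ} (hP : TransInv N P) (hQ : TransInv N Q) :
    TransInv N (P + Q) := fun c => by rw [map_add, hP c, hQ c]

lemma TransInv.pow {N : ℕ} {P : MvPolynomial (Fin N) ℂ} (hP : TransInv N P) (n : ℕ) :
    TransInv N (P ^ n) := fun c => by rw [map_pow, hP c]

lemma transInv_X_sub_X {N : ℕ} (i j : Fin N) : TransInv N (X i - X j) := fun c => by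
  simp only [map_sub, aeval_X]
  ring

lemma transInv_X_sub_half_mul_X_add_X {N : ℕ} (i j k : Fin N) :
    TransInv N (X k - C (1/2 : ℂ) * (X i + X j)) := fun c => by
  have hc : (C (1/2 : ℂ) : MvPolynomial (Fin N) ℂ) * (C c + C c) = C c := by
    rw [← C_add, ← C_mul]; congr 1; ring
  simp only [map_sub, map_mul, map_add, aeval_X, aeval_C, algebraMap_eq]
  linear_combination -hc

lemma transInv_Pnh : TransInv 3 Pnh :=
  ((transInv_X_sub_half_mul_X_add_X 0 1 2).pow 3).add ((transInv_X_sub_X 0 1).pow 2)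

lemma Qcoeff_zero (N a : ℕ) (P : MvPolynomial (Fin N) ℂ) :
    Qcoeff N a P 0 = aeval (fun i : Fin N =>
      if i.val < a then X (Sum.inr none) else X (Sum.inr (some i))) P := by
  have hcomp : ((Polynomial.aeval (0 : MvPolynomial (FVars N) ℂ)).restrictScalars ℂ).comp
      (fuse N a) = aeval (fun i : Fin N =>
        if i.val < a then X (Sum.inr none) else X (Sum.inr (some i))) := by
    ext i
    simp only [fuse, AlgHom.comp_apply, aeval_X, AlgHom.restrictScalars_apply]
    split_ifs <;> simp
  rw [Qcoeff, Polynomial.coeff_zero_eq_eval_zero, ← hcomp]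
  simp

lemma Qcoeff_Pnh_zero : Qcoeff 3 2 Pnh 0 =
    (X (Sum.inr (some 2)) - X (Sum.inr none) : MvPolynomial (FVars 3) ℂ) ^ 3 := by
  have hhalf : (C 2⁻¹ : MvPolynomial (FVars 3) ℂ) * (X (Sum.inr none) + X (Sum.inr none)) =
      X (Sum.inr none) := by
    rw [← two_mul, ← mul_assoc, ← map_ofNat C 2, ← C_mul]
    norm_num
  rw [Qcoeff_zero]
  simp [Pnh, hhalf]

lemma X_sub_X_pow_dvd_pow_iff {σ R : Type*} [CommRing R] [IsDomain R] {i j : σ} (hij : i ≠ j)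
    {m n : ℕ} : (X i - X j : MvPolynomial σ R) ^ m ∣ (X i - X j) ^ n ↔ m ≤ n := by
  classical
  refine pow_dvd_pow_iff (fun h => ?_) (fun h => ?_)
  · simpa [hij] using congrArg (eval (Pi.single i 1)) h
  · simpa using h.map (eval (0 : σ → R))

lemma minDeg_eq_zero_of_aeval_ne_zero {N a : ℕ} {P : MvPolynomial (Fin N) ℂ}
    (hP : aeval (fun i : Fin N => if i.val < a then (0 : MvPolynomial (Fin N) ℂ) else X i) P ≠ 0) :
    minDeg N P a = 0 := by
  rw [minDeg, Nat.sInf_eq_zero]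
  left
  by_contra hpos
  simp only [Set.mem_ofPred_eq, not_exists, not_and] at hpos
  refine hP ?_
  rw [aeval_def, eval₂_eq']
  refine Finset.sum_eq_zero fun mo hmo => mul_eq_zero_of_right _ ?_
  obtain ⟨i, hi, hmoi⟩ := Finset.exists_ne_zero_of_sum_ne_zero (Ne.symm (hpos mo hmo))
  refine Finset.prod_eq_zero (Finset.mem_univ i) ?_
  simp [(Finset.mem_filter.mp hi).2, hmoi]

lemma minDeg_add_of_isHomogeneous_of_lt {N m n : ℕ} {Q R : MvPolynomial (Fin N) ℂ}
    (hQ : Q.IsHomogeneous m) (hR : R.IsHomogeneous n) (hR0 : R ≠ 0) (hnm : n < m) :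
    minDeg N (Q + R) N = n := by
  have hdeg : ∀ mo : Fin N →₀ ℕ,
      ∑ i ∈ Finset.univ.filter (fun i : Fin N => i.val < N), mo i = mo.degree := by
    intro mo
    rw [Finset.filter_true_of_mem fun i _ => i.isLt, Finsupp.degree_eq_sum]
  have degree_of_mem : ∀ {P : MvPolynomial (Fin N) ℂ} {k : ℕ}, P.IsHomogeneous k →
      ∀ {d}, d ∈ P.support → d.degree = k := fun hP d hd => by
    by_contra hdk
    exact mem_support_iff.mp hd (hP.coeff_eq_zero hdk)
  obtain ⟨mo, hmo⟩ := support_nonempty.mpr hR0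
  have hmo_deg : mo.degree = n := degree_of_mem hR hmo
  have hmo_mem : mo ∈ (Q + R).support := by
    rw [mem_support_iff, coeff_add, hQ.coeff_eq_zero (by omega), zero_add]
    exact mem_support_iff.mp hmo
  refine le_antisymm (Nat.sInf_le ⟨mo, hmo_mem, by rw [hdeg, hmo_deg]⟩) ?_
  refine le_csInf ⟨_, mo, hmo_mem, rfl⟩ ?_
  rintro _ ⟨mo', hmo', rfl⟩
  rw [hdeg]
  rcases Finset.mem_union.mp (support_add hmo') with hQ' | hR'
  · rw [degree_of_mem hQ hQ']
    exact hnm.le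
  · rw [degree_of_mem hR hR']

lemma minDeg_Pnh_two : minDeg 3 Pnh 2 = 0 :=
  minDeg_eq_zero_of_aeval_ne_zero (by simp [Pnh])

lemma minDeg_Pnh_three : minDeg 3 Pnh 3 = 2 := by
  have hy : (X 2 - C (1/2 : ℂ) * (X 0 + X 1) : MvPolynomial (Fin 3) ℂ).IsHomogeneous 1 :=
    (isHomogeneous_X _ _).sub (((isHomogeneous_X _ _).add (isHomogeneous_X _ _)).C_mul _)
  have hx : (X 0 - X 1 : MvPolynomial (Fin 3) ℂ).IsHomogeneous 1 :=
    (isHomogeneous_X _ _).sub (isHomogeneous_X _ _)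
  have hx0 : (X 0 - X 1 : MvPolynomial (Fin 3) ℂ) ^ 2 ≠ 0 :=
    pow_ne_zero _ (sub_ne_zero.mpr ((X_injective (R := ℂ)).ne (by decide)))
  exact minDeg_add_of_isHomogeneous_of_lt (hy.pow 3) (hx.pow 2) hx0 (by norm_num)

/-- `Pnh` is translation invariant, its derived polynomial under
fusing `z_1, z_2` (the lowest, i.e. `λ^0`, coefficient of the fusion expansion)
is `(z_3 - z^{(2)})^3`, whose order of vanishing along `z^{(2)} = z_3` is
`D_{2,1} = 3`, while `S_2 = 0` and `S_3 = 2`; hence `D_{2,1} > S_3 - S_2`. -/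
theorem stmt12 :
    TransInv 3 Pnh ∧
    Qcoeff 3 2 Pnh 0 =
      (X (Sum.inr (some 2)) - X (Sum.inr none) : MvPolynomial (FVars 3) ℂ) ^ 3 ∧
    ((X (Sum.inr none) - X (Sum.inr (some 2)) : MvPolynomial (FVars 3) ℂ) ^ 3 ∣
        Qcoeff 3 2 Pnh 0 ∧
      ¬ (X (Sum.inr none) - X (Sum.inr (some 2)) : MvPolynomial (FVars 3) ℂ) ^ 4 ∣
        Qcoeff 3 2 Pnh 0) ∧
    minDeg 3 Pnh 2 = 0 ∧ minDeg 3 Pnh 3 = 2 ∧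
    minDeg 3 Pnh 3 - minDeg 3 Pnh 2 < 3 := by
  have hQ : Qcoeff 3 2 Pnh 0 =
      -(X (Sum.inr none) - X (Sum.inr (some 2)) : MvPolynomial (FVars 3) ℂ) ^ 3 := by
    rw [Qcoeff_Pnh_zero, ← Odd.neg_pow (by decide), neg_sub]
  have hne : (Sum.inr none : FVars 3) ≠ Sum.inr (some 2) := by simp
  refine ⟨transInv_Pnh, Qcoeff_Pnh_zero, ?_, minDeg_Pnh_two, minDeg_Pnh_three, ?_⟩
  · rw [hQ, dvd_neg, dvd_neg, X_sub_X_pow_dvd_pow_iff hne, X_sub_X_pow_dvd_pow_iff hne]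
    omega
  · rw [minDeg_Pnh_two, minDeg_Pnh_three]
    omega
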